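/- arXiv:2210.09166 — 7 statements merged into one kernel-verified Lean document; each statement's English description precedes it below -/
import Mathlib

section
/- Let k, n ≥ 1 and let M = ℝ^k × ℝ^n × (ℝ^k)^n × ℝ^k with points w = (t, q, p, z). For each α ∈ {1,…,k} define the pointwise one-forms τ^α(w)(u) = u_{t^α} and η^α(w)(u) = u_{z^α} − Σ_i p_i^α u_{q^i}, and the pointwise two-forms Ω^α(w)(u,u') = Σ_i (u_{q^i} u'_{p_i^α} − u'_{q^i} u_{p_i^α}) (the coordinate exterior derivatives dη^α). Then for each fixed α there is a unique vector field R : M → ℝ^k × ℝ^n × (ℝ^k)^n × ℝ^k satisfying, at every point w and for every β: Ω^β(w)(R(w), ·) = 0, η^β(w)(R(w)) = 0, and τ^β(w)(R(w)) = δ_α^β; namely the constant unit vector field in the t^α-direction. Likewise, for each fixed α there is a unique vector field R satisfying Ω^β(w)(R(w), ·) = 0, η^β(w)(R(w)) = δ_α^β, and τ^β(w)(R(w)) = 0 at every point; namely the constant unit vector field in the z^α-direction. -/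
open scoped BigOperators

namespace Stmt0

/-- The canonical `k`-cocontact model space: points `(t, q, p, z)` with
`t : ℝ^k`, `q : ℝ^n`, `p : (ℝ^k)^n` (with `p i α = p_i^α`), `z : ℝ^k`. -/
abbrev M (k n : ℕ) := (Fin k → ℝ) × (Fin n → ℝ) × (Fin n → Fin k → ℝ) × (Fin k → ℝ)

/-- The pointwise one-form `τ^β(w)(u) = u_{t^β}`. -/
def τ (k n : ℕ) (β : Fin k) (_w u : M k n) : ℝ := u.1 β

/-- The pointwise one-form `η^β(w)(u) = u_{z^β} − Σ_i p_i^β u_{q^i}`. -/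
def η (k n : ℕ) (β : Fin k) (w u : M k n) : ℝ :=
  u.2.2.2 β - ∑ i, w.2.2.1 i β * u.2.1 i

/-- The pointwise two-form `Ω^β(w)(u,u') = Σ_i (u_{q^i} u'_{p_i^β} − u'_{q^i} u_{p_i^β})`,
i.e. the coordinate exterior derivative `dη^β`. -/
def Ω (k n : ℕ) (β : Fin k) (_w u u' : M k n) : ℝ :=
  ∑ i, (u.2.1 i * u'.2.2.1 i β - u'.2.1 i * u.2.2.1 i β)

lemma omega_zero {k n : ℕ} {β : Fin k} {w v : M k n}
    (h : ∀ u' : M k n, Ω k n β w v u' = 0) :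
    (∀ i, v.2.1 i = 0) ∧ (∀ i, v.2.2.1 i β = 0) := by
  constructor
  · intro i
    have := h (0, 0, fun i' _ => if i' = i then 1 else 0, 0)
    simp only [Ω, Pi.zero_apply, mul_ite, mul_one, mul_zero, zero_mul, sub_zero] at this
    simpa [Finset.sum_ite_eq'] using this
  · intro i
    have := h (0, fun i' => if i' = i then 1 else 0, 0, 0)
    simp only [Ω, Pi.zero_apply, mul_zero, zero_sub, ite_mul, one_mul, zero_mul,
      Finset.sum_neg_distrib] at this
    have := neg_eq_zero.mp this
    simpa [Finset.sum_ite_eq'] using this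

lemma main_aux {k n : ℕ} (α : Fin k) (a b : Fin k → ℝ) :
    ∀ R : M k n → M k n,
      (∀ (w : M k n) (β : Fin k),
          (∀ u' : M k n, Ω k n β w (R w) u' = 0) ∧
          η k n β w (R w) = a β ∧
          τ k n β w (R w) = b β)
        ↔ R = fun _ => ((b : Fin k → ℝ), 0, 0, (a : Fin k → ℝ)) := by
  intro R
  constructor
  · intro h
    funext w
    have h1 := fun β => (h w β).1
    have h2 := fun β => (h w β).2.1
    have h3 := fun β => (h w β).2.2
    have hq := fun β => (omega_zero (h1 β)).1
    have ht : (R w).1 = b := funext fun β => h3 β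
    have hqq : (R w).2.1 = 0 := funext fun i => hq α i
    have hpp : (R w).2.2.1 = 0 := funext fun i => funext fun β => (omega_zero (h1 β)).2 i
    have hz : (R w).2.2.2 = a := by
      funext β
      have := h2 β
      simp only [η, hq β, mul_zero, Finset.sum_const_zero, sub_zero] at this
      exact this
    exact Prod.ext ht (Prod.ext hqq (Prod.ext hpp hz))
  · rintro rfl
    intro w β
    refine ⟨fun u' => by simp [Ω], ?_, ?_⟩
    · simp [η]
    · simp [τ]

/-- Existence and uniqueness of the space-time Reeb vector fields `R_α^t` and of the
contact Reeb vector fields `R_α^z` on the canonical `k`-cocontact manifold: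
for each fixed `α`, a vector field `R` satisfies the defining equations of `R_α^t`
(resp. of `R_α^z`) iff it is the constant unit vector field in the `t^α`-direction
(resp. in the `z^α`-direction). -/
theorem reeb_vector_fields_unique (k n : ℕ) (hk : 1 ≤ k) (hn : 1 ≤ n) (α : Fin k) :
    (∀ R : M k n → M k n,
      (∀ (w : M k n) (β : Fin k),
          (∀ u' : M k n, Ω k n β w (R w) u' = 0) ∧
          η k n β w (R w) = 0 ∧
          τ k n β w (R w) = (if α = β then (1:ℝ) else 0))
        ↔ R = fun _ => ((Pi.single α 1 : Fin k → ℝ), 0, 0, 0)) ∧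
    (∀ R : M k n → M k n,
      (∀ (w : M k n) (β : Fin k),
          (∀ u' : M k n, Ω k n β w (R w) u' = 0) ∧
          η k n β w (R w) = (if α = β then (1:ℝ) else 0) ∧
          τ k n β w (R w) = 0)
        ↔ R = fun _ => (0, 0, 0, (Pi.single α 1 : Fin k → ℝ))) := by
  have hs : ∀ β : Fin k, (Pi.single α 1 : Fin k → ℝ) β = if α = β then (1:ℝ) else 0 := by
    intro β; simp [Pi.single_apply, eq_comm]
  constructor
  · intro R
    have := main_aux (n := n) α (fun _ => (0:ℝ)) (fun β => if α = β then (1:ℝ) else 0) R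
    simp only [this]
    constructor
    · rintro rfl; funext w; congr 1; funext β; rw [hs]
    · rintro rfl; funext w; congr 1; funext β; rw [hs]
  · intro R
    have := main_aux (n := n) α (fun β => if α = β then (1:ℝ) else 0) (fun _ => (0:ℝ)) R
    simp only [this]
    constructor
    · rintro rfl; funext w
      refine Prod.ext rfl (Prod.ext rfl (Prod.ext rfl ?_)); funext β; simp [hs β]
    · rintro rfl; funext w
      refine Prod.ext rfl (Prod.ext rfl (Prod.ext rfl ?_)); funext β; simp [hs β]

end Stmt0
end

section
/- Fix k, n ≥ 1 and a smooth Hamiltonian h : M → ℝ on M = ℝ^k × ℝ^n × (ℝ^k)^n × ℝ^k. Then there exists a k-vector field X = (X_1, …, X_k) on M, with smooth components, satisfying the k-cocontact Hamilton–De Donder–Weyl field equations for h. -/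
namespace Stmt1

open scoped BigOperators

/-- The canonical `k`-cocontact model space: points `w = (t, q, p, z)` with
`t : ℝ^k`, `q : ℝ^n`, `p : (ℝ^k)^n` (with `p i α = p_i^α`), `z : ℝ^k`. -/
abbrev M (k n : ℕ) := (Fin k → ℝ) × (Fin n → ℝ) × (Fin n → Fin k → ℝ) × (Fin k → ℝ)

/-- The coordinate direction `∂/∂q^i`. -/
def dq (k n : ℕ) (i : Fin n) : M k n := (0, Pi.single i 1, 0, 0)

/-- The coordinate direction `∂/∂p_i^α`. -/
def dp (k n : ℕ) (i : Fin n) (α : Fin k) : M k n := (0, 0, Pi.single i (Pi.single α 1), 0)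

/-- The coordinate direction `∂/∂z^α`. -/
def dz (k n : ℕ) (α : Fin k) : M k n := (0, 0, 0, Pi.single α 1)

/-- The `k`-cocontact Hamilton–De Donder–Weyl field equations, in the canonical
coordinates of `M = ℝ^k × ℝ^n × (ℝ^k)^n × ℝ^k`, for a `k`-vector field
`X = (X_α)` with components `X_α = (A_α^β, B_α^i, C_{α i}^β, D_α^β)`:
`A_α^β = δ_α^β`, `B_α^i = ∂h/∂p_i^α`,
`Σ_α C_{α i}^α = −(∂h/∂q^i + Σ_α p_i^α ∂h/∂z^α)`, and
`Σ_α D_α^α = Σ_{i,α} p_i^α ∂h/∂p_i^α − h`, at every point. -/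
def HDWField (k n : ℕ) (h : M k n → ℝ) (X : Fin k → M k n → M k n) : Prop :=
  ∀ w : M k n,
    (∀ α β : Fin k, (X α w).1 β = if α = β then (1:ℝ) else 0) ∧
    (∀ (α : Fin k) (i : Fin n), (X α w).2.1 i = fderiv ℝ h w (dp k n i α)) ∧
    (∀ i : Fin n, ∑ α, (X α w).2.2.1 i α
      = -(fderiv ℝ h w (dq k n i) + ∑ α, w.2.2.1 i α * fderiv ℝ h w (dz k n α))) ∧
    (∑ α, (X α w).2.2.2 α
      = (∑ i, ∑ α, w.2.2.1 i α * fderiv ℝ h w (dp k n i α)) - h w)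

/-- The `k`-cocontact Hamilton–De Donder–Weyl field equations for a smooth Hamiltonian
on the canonical `k`-cocontact manifold admit a solution with smooth components. -/
theorem hdw_field_equations_have_solutions (k n : ℕ) (hk : 1 ≤ k) (hn : 1 ≤ n)
    (h : M k n → ℝ) (hh : ContDiff ℝ (⊤ : ℕ∞) h) :
    ∃ X : Fin k → M k n → M k n, (∀ α, ContDiff ℝ (⊤ : ℕ∞) (X α)) ∧ HDWField k n h X := by
  have hk0 : (k : ℝ) ≠ 0 := Nat.cast_ne_zero.mpr (by omega)
  -- smoothness of directional derivatives
  have hd : ∀ v : M k n, ContDiff ℝ (⊤ : ℕ∞) fun w => fderiv ℝ h w v := fun v =>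
    (hh.fderiv_right (by simp)).clm_apply contDiff_const
  -- smoothness of the coordinate function w ↦ w.2.2.1 i γ
  have hp : ∀ (i : Fin n) (γ : Fin k), ContDiff ℝ (⊤ : ℕ∞) fun w : M k n => w.2.2.1 i γ := by
    intro i γ
    have h1 : ContDiff ℝ (⊤ : ℕ∞) fun w : M k n => w.2.2.1 :=
      contDiff_fst.comp (contDiff_snd.comp contDiff_snd)
    exact contDiff_pi.mp (contDiff_pi.mp h1 i) γ
  refine ⟨fun α w =>
    (fun β => if α = β then (1:ℝ) else 0,
     fun i => fderiv ℝ h w (dp k n i α),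
     fun i _ => -(fderiv ℝ h w (dq k n i) + ∑ γ, w.2.2.1 i γ * fderiv ℝ h w (dz k n γ)) / k,
     fun _ => ((∑ i, ∑ γ, w.2.2.1 i γ * fderiv ℝ h w (dp k n i γ)) - h w) / k), ?_, ?_⟩
  · intro α
    refine ContDiff.prodMk contDiff_const (ContDiff.prodMk ?_ (ContDiff.prodMk ?_ ?_))
    · exact contDiff_pi.mpr fun i => hd _
    · refine contDiff_pi.mpr fun i => contDiff_pi.mpr fun β => ?_
      exact (((hd _).add (ContDiff.sum fun γ _ => (hp i γ).mul (hd _))).neg).div_const _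
    · refine contDiff_pi.mpr fun β => ?_
      exact ((ContDiff.sum fun i _ => ContDiff.sum fun γ _ =>
        (hp i γ).mul (hd _)).sub hh).div_const _
  · intro w
    refine ⟨fun α β => rfl, fun α i => rfl, fun i => ?_, ?_⟩
    · simp only [Finset.sum_const, Finset.card_univ, Fintype.card_fin, nsmul_eq_mul]
      field_simp
    · simp only [Finset.sum_const, Finset.card_univ, Fintype.card_fin, nsmul_eq_mul]
      field_simp

end Stmt1
end

section
/- Fix k, n ≥ 1, a smooth Hamiltonian h : M → ℝ on M = ℝ^k × ℝ^n × (ℝ^k)^n × ℝ^k, and a k-vector field X = (X_α) on M such that every point of M lies in the image of some integral section of X. Then X satisfies the k-cocontact Hamilton–De Donder–Weyl field equations for h if and only if every integral section ψ : ℝ^k → M of X satisfies the k-cocontact Hamilton–De Donder–Weyl map equations for h. -/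
namespace Stmt3

open scoped BigOperators

/-- The canonical `k`-cocontact model space: points `w = (t, q, p, z)` with
`t : ℝ^k`, `q : ℝ^n`, `p : (ℝ^k)^n` (with `p i α = p_i^α`), `z : ℝ^k`. -/
abbrev M (k n : ℕ) := (Fin k → ℝ) × (Fin n → ℝ) × (Fin n → Fin k → ℝ) × (Fin k → ℝ)

/-- The coordinate direction `∂/∂q^i`. -/
def dq (k n : ℕ) (i : Fin n) : M k n := (0, Pi.single i 1, 0, 0)

/-- The coordinate direction `∂/∂p_i^α`. -/
def dp (k n : ℕ) (i : Fin n) (α : Fin k) : M k n := (0, 0, Pi.single i (Pi.single α 1), 0)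

/-- The coordinate direction `∂/∂z^α`. -/
def dz (k n : ℕ) (α : Fin k) : M k n := (0, 0, 0, Pi.single α 1)

/-- The `k`-cocontact Hamilton–De Donder–Weyl field equations, in the canonical
coordinates of `M = ℝ^k × ℝ^n × (ℝ^k)^n × ℝ^k`, for a `k`-vector field
`X = (X_α)` with components `X_α = (A_α^β, B_α^i, C_{α i}^β, D_α^β)`:
`A_α^β = δ_α^β`, `B_α^i = ∂h/∂p_i^α`,
`Σ_α C_{α i}^α = −(∂h/∂q^i + Σ_α p_i^α ∂h/∂z^α)`, and
`Σ_α D_α^α = Σ_{i,α} p_i^α ∂h/∂p_i^α − h`, at every point. -/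
def HDWField (k n : ℕ) (h : M k n → ℝ) (X : Fin k → M k n → M k n) : Prop :=
  ∀ w : M k n,
    (∀ α β : Fin k, (X α w).1 β = if α = β then (1:ℝ) else 0) ∧
    (∀ (α : Fin k) (i : Fin n), (X α w).2.1 i = fderiv ℝ h w (dp k n i α)) ∧
    (∀ i : Fin n, ∑ α, (X α w).2.2.1 i α
      = -(fderiv ℝ h w (dq k n i) + ∑ α, w.2.2.1 i α * fderiv ℝ h w (dz k n α))) ∧
    (∑ α, (X α w).2.2.2 α
      = (∑ i, ∑ α, w.2.2.1 i α * fderiv ℝ h w (dp k n i α)) - h w)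

/-- The `k`-cocontact Hamilton–De Donder–Weyl map equations for a differentiable map
`ψ : ℝ^k → M`, `ψ(r) = (t(r), q(r), p(r), z(r))`:
`∂t^β/∂r^α = δ_α^β`, `∂q^i/∂r^α = (∂h/∂p_i^α)∘ψ`,
`Σ_α ∂p_i^α/∂r^α = −(∂h/∂q^i + Σ_α p_i^α ∂h/∂z^α)∘ψ`, and
`Σ_α ∂z^α/∂r^α = (Σ_{i,α} p_i^α ∂h/∂p_i^α − h)∘ψ`. -/
def HDWMap (k n : ℕ) (h : M k n → ℝ) (ψ : (Fin k → ℝ) → M k n) : Prop :=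
  Differentiable ℝ ψ ∧
  ∀ r : Fin k → ℝ,
    (∀ α β : Fin k, (fderiv ℝ ψ r (Pi.single α 1)).1 β = if α = β then (1:ℝ) else 0) ∧
    (∀ (α : Fin k) (i : Fin n),
      (fderiv ℝ ψ r (Pi.single α 1)).2.1 i = fderiv ℝ h (ψ r) (dp k n i α)) ∧
    (∀ i : Fin n, ∑ α, (fderiv ℝ ψ r (Pi.single α 1)).2.2.1 i α
      = -(fderiv ℝ h (ψ r) (dq k n i)
          + ∑ α, (ψ r).2.2.1 i α * fderiv ℝ h (ψ r) (dz k n α))) ∧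
    (∑ α, (fderiv ℝ ψ r (Pi.single α 1)).2.2.2 α
      = (∑ i, ∑ α, (ψ r).2.2.1 i α * fderiv ℝ h (ψ r) (dp k n i α)) - h (ψ r))

/-- `ψ : ℝ^k → M` is an integral section of the `k`-vector field `X = (X_α)` if it is
differentiable and `∂ψ/∂r^α(r) = X_α(ψ(r))` for all `r` and `α`. -/
def IsIntegralSection (k n : ℕ) (X : Fin k → M k n → M k n)
    (ψ : (Fin k → ℝ) → M k n) : Prop :=
  Differentiable ℝ ψ ∧ ∀ (r : Fin k → ℝ) (α : Fin k),
    fderiv ℝ ψ r (Pi.single α 1) = X α (ψ r)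

/-- For a `k`-vector field `X` such that every point lies in the image of some
integral section of `X`, `X` solves the `k`-cocontact Hamilton–De Donder–Weyl field
equations iff every integral section of `X` solves the corresponding map equations. -/
theorem hdw_field_iff_integral_sections (k n : ℕ) (hk : 1 ≤ k) (hn : 1 ≤ n)
    (h : M k n → ℝ) (hh : ContDiff ℝ (⊤ : ℕ∞) h)
    (X : Fin k → M k n → M k n) (hX : ∀ α, ContDiff ℝ (⊤ : ℕ∞) (X α))
    (hint : ∀ w : M k n, ∃ (ψ : (Fin k → ℝ) → M k n) (r : Fin k → ℝ),
      IsIntegralSection k n X ψ ∧ ψ r = w) :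
    HDWField k n h X ↔
      (∀ ψ : (Fin k → ℝ) → M k n, IsIntegralSection k n X ψ → HDWMap k n h ψ) := by
  constructor
  · intro hF ψ hψ
    refine ⟨hψ.1, fun r => ?_⟩
    obtain ⟨h1, h2, h3, h4⟩ := hF (ψ r)
    simp only [hψ.2 r]
    exact ⟨h1, h2, h3, h4⟩
  · intro H w
    obtain ⟨ψ, r, hψ, hw⟩ := hint w
    obtain ⟨-, hmap⟩ := H ψ hψ
    obtain ⟨h1, h2, h3, h4⟩ := hmap r
    simp only [hψ.2 r, hw] at h1 h2 h3 h4
    exact ⟨h1, h2, h3, h4⟩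

end Stmt3
end

section
/- Fix k, n ≥ 1 and a smooth regular Lagrangian L : P → ℝ on P = ℝ^k × ℝ^n × (ℝ^k)^n × ℝ^k (i.e. the nk × nk Hessian matrix W = (∂²L/∂v_α^i ∂v_β^j) is invertible at every point). If a k-vector field X = (X_α) on P satisfies the coordinate Lagrangian field equations for L, then X is a SOPDE, i.e. B_α^i(w) = v_α^i at every point w = (t, q, v, z) ∈ P. -/
namespace Stmt4

open scoped BigOperators

/-- The Lagrangian phase space: points `w = (t, q, v, z)` with `t : ℝ^k`, `q : ℝ^n`,
`v : (ℝ^k)^n` (with `v i α = v_α^i`), `z : ℝ^k`. -/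
abbrev P (k n : ℕ) := (Fin k → ℝ) × (Fin n → ℝ) × (Fin n → Fin k → ℝ) × (Fin k → ℝ)

/-- The coordinate direction `∂/∂t^β`. -/
def dt (k n : ℕ) (β : Fin k) : P k n := (Pi.single β 1, 0, 0, 0)

/-- The coordinate direction `∂/∂q^i`. -/
def dq (k n : ℕ) (i : Fin n) : P k n := (0, Pi.single i 1, 0, 0)

/-- The coordinate direction `∂/∂v_α^i`. -/
def dv (k n : ℕ) (i : Fin n) (α : Fin k) : P k n := (0, 0, Pi.single i (Pi.single α 1), 0)

/-- The coordinate direction `∂/∂z^α`. -/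
def dz (k n : ℕ) (α : Fin k) : P k n := (0, 0, 0, Pi.single α 1)

/-- The iterated second partial derivative of `L` at `w`, first in direction `d₁`,
then in direction `d₂`. -/
noncomputable def D2 (k n : ℕ) (L : P k n → ℝ) (w d₁ d₂ : P k n) : ℝ :=
  fderiv ℝ (fun x => fderiv ℝ L x d₁) w d₂

/-- The `nk × nk` velocity Hessian matrix `W = (∂²L/∂v_α^i ∂v_β^j)` of `L` at `w`. -/
noncomputable def Hess (k n : ℕ) (L : P k n → ℝ) (w : P k n) :
    Matrix (Fin n × Fin k) (Fin n × Fin k) ℝ :=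
  fun a b => D2 k n L w (dv k n a.1 a.2) (dv k n b.1 b.2)

/-- `L` is regular if its velocity Hessian is invertible at every point. -/
def Regular (k n : ℕ) (L : P k n → ℝ) : Prop :=
  ∀ w : P k n, IsUnit (Hess k n L w)

/-- A `k`-vector field `X = (X_α)` with components `(A_α^β, B_α^i, C_{αβ}^i, D_α^β)`
is a SOPDE if `B_α^i(w) = v_α^i` at every point `w = (t, q, v, z)`. -/
def IsSOPDE (k n : ℕ) (X : Fin k → P k n → P k n) : Prop :=
  ∀ (w : P k n) (α : Fin k) (i : Fin n), (X α w).2.1 i = w.2.2.1 i α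

/-- The coordinate Lagrangian field equations (the `k`-cocontact Lagrangian equations)
for a `k`-vector field `X = (X_α)` with components `X_α = (A_α^β, B_α^i, C_{αβ}^i, D_α^β)`
(here `A α w β = (X α w).1 β`, `B α w i = (X α w).2.1 i`, `C α w i β = (X α w).2.2.1 i β`,
`D α w β = (X α w).2.2.2 β`), at every point of `P`:
(1) `A_α^β = δ_α^β`;
(2) `Σ_{α,j}(B_α^j − v_α^j) ∂²L/∂v_α^j∂z^β = 0` for all `β`;
(2') `Σ_{α,j}(B_α^j − v_α^j) ∂²L/∂v_α^j∂t^β = 0` for all `β`;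
(3) `Σ_{α,j}(B_α^j − v_α^j) ∂²L/∂v_β^i∂v_α^j = 0` for all `β, i`;
(4) `Σ_{α,j}(B_α^j − v_α^j)∂²L/∂q^i∂v_α^j + ∂L/∂q^i − Σ_α ∂²L/∂t^α∂v_α^i
     − Σ_{α,j}(∂²L/∂q^j∂v_α^i) B_α^j − Σ_{α,β,j}(∂²L/∂v_β^j∂v_α^i) C_{αβ}^j
     − Σ_{α,β}(∂²L/∂z^β∂v_α^i) D_α^β + Σ_α (∂L/∂z^α)(∂L/∂v_α^i) = 0` for all `i`;
(5) `L + Σ_{i,α}(∂L/∂v_α^i)(B_α^i − v_α^i) − Σ_α D_α^α = 0`. -/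
def LagFieldEqs (k n : ℕ) (L : P k n → ℝ) (X : Fin k → P k n → P k n) : Prop :=
  ∀ w : P k n,
    (∀ α β : Fin k, (X α w).1 β = if α = β then (1:ℝ) else 0) ∧
    (∀ β : Fin k, ∑ α, ∑ j,
      ((X α w).2.1 j - w.2.2.1 j α) * D2 k n L w (dv k n j α) (dz k n β) = 0) ∧
    (∀ β : Fin k, ∑ α, ∑ j,
      ((X α w).2.1 j - w.2.2.1 j α) * D2 k n L w (dv k n j α) (dt k n β) = 0) ∧
    (∀ (β : Fin k) (i : Fin n), ∑ α, ∑ j,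
      ((X α w).2.1 j - w.2.2.1 j α) * D2 k n L w (dv k n i β) (dv k n j α) = 0) ∧
    (∀ i : Fin n,
      (∑ α, ∑ j, ((X α w).2.1 j - w.2.2.1 j α) * D2 k n L w (dv k n j α) (dq k n i))
      + fderiv ℝ L w (dq k n i)
      - (∑ α, D2 k n L w (dv k n i α) (dt k n α))
      - (∑ α, ∑ j, D2 k n L w (dv k n i α) (dq k n j) * (X α w).2.1 j)
      - (∑ α, ∑ β, ∑ j, D2 k n L w (dv k n i α) (dv k n j β) * (X α w).2.2.1 j β)
      - (∑ α, ∑ β, D2 k n L w (dv k n i α) (dz k n β) * (X α w).2.2.2 β)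
      + (∑ α, fderiv ℝ L w (dz k n α) * fderiv ℝ L w (dv k n i α)) = 0) ∧
    (L w + (∑ i, ∑ α, fderiv ℝ L w (dv k n i α) * ((X α w).2.1 i - w.2.2.1 i α))
      - ∑ α, (X α w).2.2.2 α = 0)

/-- If `L` is a smooth regular Lagrangian and the `k`-vector field `X` satisfies the
coordinate Lagrangian field equations for `L`, then `X` is a SOPDE. -/
theorem lagrangian_solution_is_sopde (k n : ℕ) (hk : 1 ≤ k) (hn : 1 ≤ n)
    (L : P k n → ℝ) (hL : ContDiff ℝ (⊤ : ℕ∞) L) (hreg : Regular k n L)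
    (X : Fin k → P k n → P k n) (hX : ∀ α, ContDiff ℝ (⊤ : ℕ∞) (X α))
    (heq : LagFieldEqs k n L X) :
    IsSOPDE k n X := by
  intro w α i
  set M := Hess k n L w with hM
  set u : Fin n × Fin k → ℝ := fun b => (X b.2 w).2.1 b.1 - w.2.2.1 b.1 b.2 with hu
  have h3 := (heq w).2.2.2.1
  have hMu : M.mulVec u = 0 := by
    funext a
    obtain ⟨i', β⟩ := a
    have key : (∑ a : Fin k, ∑ j : Fin n, u (j, a) * M (i', β) (j, a)) = 0 := by
      simpa [hu, hM, Hess] using h3 β i'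
    show ∑ b : Fin n × Fin k, M (i', β) b * u b = 0
    rw [Fintype.sum_prod_type, Finset.sum_comm]
    exact (Finset.sum_congr rfl fun a _ => Finset.sum_congr rfl fun j _ =>
      mul_comm _ _).trans key
  have hdet : IsUnit M.det := (Matrix.isUnit_iff_isUnit_det M).mp (hreg w)
  have hinv : M⁻¹ * M = 1 := Matrix.nonsing_inv_mul M hdet
  have hu0 : u = 0 := by
    have : (M⁻¹ * M).mulVec u = M⁻¹.mulVec (M.mulVec u) := by
      rw [Matrix.mulVec_mulVec]
    rw [hinv, hMu, Matrix.one_mulVec, Matrix.mulVec_zero] at this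
    exact this
  have := congrFun hu0 (i, α)
  simp only [hu, Pi.zero_apply] at this
  linarith

end Stmt4
end

section
/- Fix k, n ≥ 1 and a smooth regular Lagrangian L : P → ℝ on P = ℝ^k × ℝ^n × (ℝ^k)^n × ℝ^k. Let X = (X_α) be a k-vector field on P satisfying the coordinate Lagrangian field equations for L, and let ψ : ℝ^k → P, ψ(r) = (t(r), q(r), v(r), z(r)), be an integral section of X. Then ψ satisfies the k-cocontact Euler–Lagrange equations: ∂t^β/∂r^α = δ_α^β; ∂/∂r^α[(∂L/∂v_α^i)∘ψ] summed over α equals (∂L/∂q^i + Σ_α (∂L/∂z^α)(∂L/∂v_α^i))∘ψ for every i; and Σ_α ∂z^α/∂r^α = L∘ψ. -/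
namespace Stmt5

open scoped BigOperators

/-- The Lagrangian phase space: points `w = (t, q, v, z)` with `t : ℝ^k`, `q : ℝ^n`,
`v : (ℝ^k)^n` (with `v i α = v_α^i`), `z : ℝ^k`. -/
abbrev P (k n : ℕ) := (Fin k → ℝ) × (Fin n → ℝ) × (Fin n → Fin k → ℝ) × (Fin k → ℝ)

/-- The coordinate direction `∂/∂t^β`. -/
def dt (k n : ℕ) (β : Fin k) : P k n := (Pi.single β 1, 0, 0, 0)

/-- The coordinate direction `∂/∂q^i`. -/
def dq (k n : ℕ) (i : Fin n) : P k n := (0, Pi.single i 1, 0, 0)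

/-- The coordinate direction `∂/∂v_α^i`. -/
def dv (k n : ℕ) (i : Fin n) (α : Fin k) : P k n := (0, 0, Pi.single i (Pi.single α 1), 0)

/-- The coordinate direction `∂/∂z^α`. -/
def dz (k n : ℕ) (α : Fin k) : P k n := (0, 0, 0, Pi.single α 1)

/-- The iterated second partial derivative of `L` at `w`, first in direction `d₁`,
then in direction `d₂`. -/
noncomputable def D2 (k n : ℕ) (L : P k n → ℝ) (w d₁ d₂ : P k n) : ℝ :=
  fderiv ℝ (fun x => fderiv ℝ L x d₁) w d₂

/-- The `nk × nk` velocity Hessian matrix `W = (∂²L/∂v_α^i ∂v_β^j)` of `L` at `w`. -/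
noncomputable def Hess (k n : ℕ) (L : P k n → ℝ) (w : P k n) :
    Matrix (Fin n × Fin k) (Fin n × Fin k) ℝ :=
  fun a b => D2 k n L w (dv k n a.1 a.2) (dv k n b.1 b.2)

/-- `L` is regular if its velocity Hessian is invertible at every point. -/
def Regular (k n : ℕ) (L : P k n → ℝ) : Prop :=
  ∀ w : P k n, IsUnit (Hess k n L w)

/-- A `k`-vector field `X = (X_α)` with components `(A_α^β, B_α^i, C_{αβ}^i, D_α^β)`
is a SOPDE if `B_α^i(w) = v_α^i` at every point `w = (t, q, v, z)`. -/
def IsSOPDE (k n : ℕ) (X : Fin k → P k n → P k n) : Prop :=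
  ∀ (w : P k n) (α : Fin k) (i : Fin n), (X α w).2.1 i = w.2.2.1 i α

/-- The coordinate Lagrangian field equations (the `k`-cocontact Lagrangian equations)
for a `k`-vector field `X = (X_α)` with components `X_α = (A_α^β, B_α^i, C_{αβ}^i, D_α^β)`
(here `A α w β = (X α w).1 β`, `B α w i = (X α w).2.1 i`, `C α w i β = (X α w).2.2.1 i β`,
`D α w β = (X α w).2.2.2 β`), at every point of `P`:
(1) `A_α^β = δ_α^β`;
(2) `Σ_{α,j}(B_α^j − v_α^j) ∂²L/∂v_α^j∂z^β = 0` for all `β`;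
(2') `Σ_{α,j}(B_α^j − v_α^j) ∂²L/∂v_α^j∂t^β = 0` for all `β`;
(3) `Σ_{α,j}(B_α^j − v_α^j) ∂²L/∂v_β^i∂v_α^j = 0` for all `β, i`;
(4) `Σ_{α,j}(B_α^j − v_α^j)∂²L/∂q^i∂v_α^j + ∂L/∂q^i − Σ_α ∂²L/∂t^α∂v_α^i
     − Σ_{α,j}(∂²L/∂q^j∂v_α^i) B_α^j − Σ_{α,β,j}(∂²L/∂v_β^j∂v_α^i) C_{αβ}^j
     − Σ_{α,β}(∂²L/∂z^β∂v_α^i) D_α^β + Σ_α (∂L/∂z^α)(∂L/∂v_α^i) = 0` for all `i`;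
(5) `L + Σ_{i,α}(∂L/∂v_α^i)(B_α^i − v_α^i) − Σ_α D_α^α = 0`. -/
def LagFieldEqs (k n : ℕ) (L : P k n → ℝ) (X : Fin k → P k n → P k n) : Prop :=
  ∀ w : P k n,
    (∀ α β : Fin k, (X α w).1 β = if α = β then (1:ℝ) else 0) ∧
    (∀ β : Fin k, ∑ α, ∑ j,
      ((X α w).2.1 j - w.2.2.1 j α) * D2 k n L w (dv k n j α) (dz k n β) = 0) ∧
    (∀ β : Fin k, ∑ α, ∑ j,
      ((X α w).2.1 j - w.2.2.1 j α) * D2 k n L w (dv k n j α) (dt k n β) = 0) ∧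
    (∀ (β : Fin k) (i : Fin n), ∑ α, ∑ j,
      ((X α w).2.1 j - w.2.2.1 j α) * D2 k n L w (dv k n i β) (dv k n j α) = 0) ∧
    (∀ i : Fin n,
      (∑ α, ∑ j, ((X α w).2.1 j - w.2.2.1 j α) * D2 k n L w (dv k n j α) (dq k n i))
      + fderiv ℝ L w (dq k n i)
      - (∑ α, D2 k n L w (dv k n i α) (dt k n α))
      - (∑ α, ∑ j, D2 k n L w (dv k n i α) (dq k n j) * (X α w).2.1 j)
      - (∑ α, ∑ β, ∑ j, D2 k n L w (dv k n i α) (dv k n j β) * (X α w).2.2.1 j β)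
      - (∑ α, ∑ β, D2 k n L w (dv k n i α) (dz k n β) * (X α w).2.2.2 β)
      + (∑ α, fderiv ℝ L w (dz k n α) * fderiv ℝ L w (dv k n i α)) = 0) ∧
    (L w + (∑ i, ∑ α, fderiv ℝ L w (dv k n i α) * ((X α w).2.1 i - w.2.2.1 i α))
      - ∑ α, (X α w).2.2.2 α = 0)

/-- `ψ : ℝ^k → P` is an integral section of the `k`-vector field `X = (X_α)` if it is
differentiable and `∂ψ/∂r^α(r) = X_α(ψ(r))` for all `r` and `α`. -/
def IsIntegralSection (k n : ℕ) (X : Fin k → P k n → P k n)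
    (ψ : (Fin k → ℝ) → P k n) : Prop :=
  Differentiable ℝ ψ ∧ ∀ (r : Fin k → ℝ) (α : Fin k),
    fderiv ℝ ψ r (Pi.single α 1) = X α (ψ r)

lemma decomp_aux (k n : ℕ) (f : P k n →L[ℝ] ℝ) (u : P k n) :
    f u = (∑ β, u.1 β * f (dt k n β)) + (∑ i, u.2.1 i * f (dq k n i))
      + (∑ i, ∑ β, u.2.2.1 i β * f (dv k n i β)) + (∑ β, u.2.2.2 β * f (dz k n β)) := by
  have hu : u = (∑ β, u.1 β • dt k n β) + (∑ i, u.2.1 i • dq k n i)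
      + (∑ i, ∑ β, u.2.2.1 i β • dv k n i β) + (∑ β, u.2.2.2 β • dz k n β) := by
    refine Prod.ext ?_ (Prod.ext ?_ (Prod.ext ?_ ?_)) <;>
      · simp only [Prod.fst_sum, Prod.snd_sum, Prod.fst_add, Prod.snd_add,
          Prod.smul_fst, Prod.smul_snd, dt, dq, dv, dz, smul_zero,
          Finset.sum_const_zero, add_zero, zero_add]
        funext a
        try funext b
        simp [Finset.sum_apply, Pi.single_apply, ite_apply, Finset.sum_ite_eq, Finset.sum_ite_eq']
  conv_lhs => rw [hu]
  simp [smul_eq_mul]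

/-- Integral sections of solutions of the coordinate Lagrangian field equations for a
smooth regular Lagrangian satisfy the `k`-cocontact Euler–Lagrange equations:
`∂t^β/∂r^α = δ_α^β`,
`Σ_α ∂/∂r^α[(∂L/∂v_α^i)∘ψ] = (∂L/∂q^i + Σ_α (∂L/∂z^α)(∂L/∂v_α^i))∘ψ`, and
`Σ_α ∂z^α/∂r^α = L∘ψ`. -/
theorem integral_sections_satisfy_euler_lagrange (k n : ℕ) (hk : 1 ≤ k) (hn : 1 ≤ n)
    (L : P k n → ℝ) (hL : ContDiff ℝ (⊤ : ℕ∞) L) (hreg : Regular k n L)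
    (X : Fin k → P k n → P k n) (hX : ∀ α, ContDiff ℝ (⊤ : ℕ∞) (X α))
    (heq : LagFieldEqs k n L X)
    (ψ : (Fin k → ℝ) → P k n) (hψ : IsIntegralSection k n X ψ) :
    ∀ r : Fin k → ℝ,
      (∀ α β : Fin k, (fderiv ℝ ψ r (Pi.single α 1)).1 β = if α = β then (1:ℝ) else 0) ∧
      (∀ i : Fin n,
        ∑ α, fderiv ℝ (fun s => fderiv ℝ L (ψ s) (dv k n i α)) r (Pi.single α 1)
          = fderiv ℝ L (ψ r) (dq k n i)
            + ∑ α, fderiv ℝ L (ψ r) (dz k n α) * fderiv ℝ L (ψ r) (dv k n i α)) ∧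
      (∑ α, (fderiv ℝ ψ r (Pi.single α 1)).2.2.2 α = L (ψ r)) := by
  obtain ⟨hψd, hψint⟩ := hψ
  intro r
  set w := ψ r with hw
  obtain ⟨h1, h2, h2', h3, h4, h5⟩ := heq w
  -- SOPDE property from regularity
  have hB : ∀ (α : Fin k) (j : Fin n), (X α w).2.1 j = w.2.2.1 j α := by
    have hdet : IsUnit (Hess k n L w).det := (Matrix.isUnit_iff_isUnit_det _).mp (hreg w)
    set M := Hess k n L w with hM
    set x : Fin n × Fin k → ℝ := fun p => (X p.2 w).2.1 p.1 - w.2.2.1 p.1 p.2 with hxdef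
    have hMx : M.mulVec x = 0 := by
      funext a
      obtain ⟨i, β⟩ := a
      have h3' := h3 β i
      calc M.mulVec x (i, β) = ∑ p : Fin n × Fin k, M (i,β) p * x p := by
            simp [Matrix.mulVec, dotProduct]
        _ = ∑ j, ∑ α, M (i,β) (j,α) * x (j,α) := by rw [Fintype.sum_prod_type]
        _ = ∑ α, ∑ j, ((X α w).2.1 j - w.2.2.1 j α)
              * D2 k n L w (dv k n i β) (dv k n j α) := by
            rw [Finset.sum_comm]
            refine Finset.sum_congr rfl fun α _ => Finset.sum_congr rfl fun j _ => ?_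
            simp [hM, Hess, hxdef, mul_comm]
        _ = 0 := h3'
    have hx0 : x = 0 := by
      have h := congrArg M⁻¹.mulVec hMx
      rwa [Matrix.mulVec_mulVec, Matrix.nonsing_inv_mul M hdet, Matrix.one_mulVec,
        Matrix.mulVec_zero] at h
    intro α j
    have := congrFun hx0 (j, α)
    simpa [hxdef, sub_eq_zero] using this
  refine ⟨?_, ?_, ?_⟩
  · intro α β
    rw [hψint r α]
    exact h1 α β
  · intro i
    have hfd : ContDiff ℝ (⊤ : ℕ∞) (fderiv ℝ L) := hL.fderiv_right (by simp)
    have hgdiff : ∀ (d : P k n), Differentiable ℝ (fun x => fderiv ℝ L x d) := fun d =>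
      (ContinuousLinearMap.apply ℝ ℝ d).differentiable.comp (hfd.differentiable (by simp))
    have hchain : ∀ (α : Fin k) (d : P k n),
        fderiv ℝ (fun s => fderiv ℝ L (ψ s) d) r (Pi.single α 1)
          = fderiv ℝ (fun x => fderiv ℝ L x d) w (X α w) := by
      intro α d
      have hc : fderiv ℝ ((fun x => fderiv ℝ L x d) ∘ ψ) r
          = (fderiv ℝ (fun x => fderiv ℝ L x d) (ψ r)).comp (fderiv ℝ ψ r) :=
        fderiv_comp r (hgdiff d (ψ r)) (hψd r)
      have : fderiv ℝ (fun s => fderiv ℝ L (ψ s) d) r (Pi.single α 1)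
          = (fderiv ℝ (fun x => fderiv ℝ L x d) (ψ r)).comp (fderiv ℝ ψ r)
              (Pi.single α 1) := by
        exact congrFun (congrArg _ hc) (Pi.single α 1)
      rw [this]
      simp only [ContinuousLinearMap.coe_comp', Function.comp_apply, hψint r α, ← hw]
    have hXd : ∀ α, fderiv ℝ (fun x => fderiv ℝ L x (dv k n i α)) w (X α w)
        = (∑ β, (X α w).1 β * D2 k n L w (dv k n i α) (dt k n β))
        + (∑ j, (X α w).2.1 j * D2 k n L w (dv k n i α) (dq k n j))
        + (∑ j, ∑ β, (X α w).2.2.1 j β * D2 k n L w (dv k n i α) (dv k n j β))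
        + (∑ β, (X α w).2.2.2 β * D2 k n L w (dv k n i α) (dz k n β)) := fun α =>
      decomp_aux k n (fderiv ℝ (fun x => fderiv ℝ L x (dv k n i α)) w) (X α w)
    have hstep : ∑ α, fderiv ℝ (fun s => fderiv ℝ L (ψ s) (dv k n i α)) r (Pi.single α 1)
        = (∑ α, ∑ β, (X α w).1 β * D2 k n L w (dv k n i α) (dt k n β))
        + (∑ α, ∑ j, (X α w).2.1 j * D2 k n L w (dv k n i α) (dq k n j))
        + (∑ α, ∑ j, ∑ β, (X α w).2.2.1 j β * D2 k n L w (dv k n i α) (dv k n j β))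
        + (∑ α, ∑ β, (X α w).2.2.2 β * D2 k n L w (dv k n i α) (dz k n β)) := by
      rw [← Finset.sum_add_distrib, ← Finset.sum_add_distrib, ← Finset.sum_add_distrib]
      refine Finset.sum_congr rfl fun α _ => ?_
      rw [hchain α (dv k n i α), hXd α]
    have hT1 : ∑ α, ∑ β, (X α w).1 β * D2 k n L w (dv k n i α) (dt k n β)
        = ∑ α, D2 k n L w (dv k n i α) (dt k n α) := by
      refine Finset.sum_congr rfl fun α _ => ?_
      simp [h1 α, ite_mul, Finset.sum_ite_eq]
    have e2 : ∑ α, ∑ j, (X α w).2.1 j * D2 k n L w (dv k n i α) (dq k n j)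
        = ∑ α, ∑ j, D2 k n L w (dv k n i α) (dq k n j) * (X α w).2.1 j :=
      Finset.sum_congr rfl fun α _ => Finset.sum_congr rfl fun j _ => mul_comm _ _
    have e3 : ∑ α, ∑ j, ∑ β, (X α w).2.2.1 j β * D2 k n L w (dv k n i α) (dv k n j β)
        = ∑ α, ∑ β, ∑ j, D2 k n L w (dv k n i α) (dv k n j β) * (X α w).2.2.1 j β := by
      refine Finset.sum_congr rfl fun α _ => ?_
      rw [Finset.sum_comm]
      exact Finset.sum_congr rfl fun β _ => Finset.sum_congr rfl fun j _ => mul_comm _ _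
    have e4 : ∑ α, ∑ β, (X α w).2.2.2 β * D2 k n L w (dv k n i α) (dz k n β)
        = ∑ α, ∑ β, D2 k n L w (dv k n i α) (dz k n β) * (X α w).2.2.2 β :=
      Finset.sum_congr rfl fun α _ => Finset.sum_congr rfl fun β _ => mul_comm _ _
    have hz0 : ∑ α, ∑ j, ((X α w).2.1 j - w.2.2.1 j α)
        * D2 k n L w (dv k n j α) (dq k n i) = 0 := by
      refine Finset.sum_eq_zero fun α _ => Finset.sum_eq_zero fun j _ => ?_
      rw [hB α j, sub_self, zero_mul]
    have h4' := h4 i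
    rw [hz0, zero_add] at h4'
    rw [hstep, hT1, e2, e3, e4]
    linarith
  · have hS : ∑ i, ∑ α, fderiv ℝ L w (dv k n i α)
        * ((X α w).2.1 i - w.2.2.1 i α) = 0 := by
      refine Finset.sum_eq_zero fun i _ => Finset.sum_eq_zero fun α _ => ?_
      rw [hB α i, sub_self, mul_zero]
    rw [hS, add_zero] at h5
    have hg : ∀ α, (fderiv ℝ ψ r (Pi.single α 1)).2.2.2 α = (X α w).2.2.2 α := by
      intro α; rw [hψint r α]
    rw [Finset.sum_congr rfl fun α _ => hg α]
    linarith


end Stmt5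
end

section
/- Fix k, n ≥ 1 and a smooth h₀ : M₀ → ℝ on M₀ = ℝ^n × (ℝ^k)^n × ℝ^k, and let h = h₀ ∘ pr₂ : ℝ^k × M₀ → ℝ. Let X = (X_α) be a k-vector field on M₀ satisfying the k-contact Hamilton–De Donder–Weyl field equations for h₀, and define its suspension X̄ = (X̄_α) on ℝ^k × M₀ by X̄_α(t, m) = (e_α, X_α(m)), where e_α is the α-th standard basis vector of ℝ^k. Then: (a) X̄ satisfies the k-cocontact Hamilton–De Donder–Weyl field equations for h; and (b) for every differentiable map ψ : ℝ^k → M₀ and every t₀ ∈ ℝ^k, ψ is an integral section of X if and only if the map ψ̄(r) = (t₀ + r, ψ(r)) is an integral section of X̄. -/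
namespace Stmt11

open scoped BigOperators

/-- The canonical `k`-contact model space: points `(q, p, z)` with `q : ℝ^n`,
`p : (ℝ^k)^n` (with `p i α = p_i^α`), `z : ℝ^k`. -/
abbrev M0 (k n : ℕ) := (Fin n → ℝ) × (Fin n → Fin k → ℝ) × (Fin k → ℝ)

/-- The coordinate direction `∂/∂q^i` in `M0`. -/
def dq0 (k n : ℕ) (i : Fin n) : M0 k n := (Pi.single i 1, 0, 0)

/-- The coordinate direction `∂/∂p_i^α` in `M0`. -/
def dp0 (k n : ℕ) (i : Fin n) (α : Fin k) : M0 k n := (0, Pi.single i (Pi.single α 1), 0)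

/-- The coordinate direction `∂/∂z^α` in `M0`. -/
def dz0 (k n : ℕ) (α : Fin k) : M0 k n := (0, 0, Pi.single α 1)

/-- The canonical `k`-cocontact model space `ℝ^k × M0`, with points `(t, (q, p, z))`. -/
abbrev Mbar (k n : ℕ) := (Fin k → ℝ) × M0 k n

/-- The coordinate direction `∂/∂q^i` in `Mbar = ℝ^k × M0`. -/
def dqb (k n : ℕ) (i : Fin n) : Mbar k n := (0, dq0 k n i)

/-- The coordinate direction `∂/∂p_i^α` in `Mbar = ℝ^k × M0`. -/
def dpb (k n : ℕ) (i : Fin n) (α : Fin k) : Mbar k n := (0, dp0 k n i α)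

/-- The coordinate direction `∂/∂z^α` in `Mbar = ℝ^k × M0`. -/
def dzb (k n : ℕ) (α : Fin k) : Mbar k n := (0, dz0 k n α)

/-- The `k`-contact Hamilton–De Donder–Weyl map equations for a differentiable map
`ψ : ℝ^k → M0`, `ψ(r) = (q(r), p(r), z(r))`:
`∂q^i/∂r^α = (∂h₀/∂p_i^α)∘ψ`,
`Σ_α ∂p_i^α/∂r^α = −(∂h₀/∂q^i + Σ_α p_i^α ∂h₀/∂z^α)∘ψ`, and
`Σ_α ∂z^α/∂r^α = (Σ_{i,α} p_i^α ∂h₀/∂p_i^α − h₀)∘ψ`. -/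
def ContactHDWMap (k n : ℕ) (h0 : M0 k n → ℝ) (ψ : (Fin k → ℝ) → M0 k n) : Prop :=
  Differentiable ℝ ψ ∧
  ∀ r : Fin k → ℝ,
    (∀ (α : Fin k) (i : Fin n),
      (fderiv ℝ ψ r (Pi.single α 1)).1 i = fderiv ℝ h0 (ψ r) (dp0 k n i α)) ∧
    (∀ i : Fin n, ∑ α, (fderiv ℝ ψ r (Pi.single α 1)).2.1 i α
      = -(fderiv ℝ h0 (ψ r) (dq0 k n i)
          + ∑ α, (ψ r).2.1 i α * fderiv ℝ h0 (ψ r) (dz0 k n α))) ∧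
    (∑ α, (fderiv ℝ ψ r (Pi.single α 1)).2.2 α
      = (∑ i, ∑ α, (ψ r).2.1 i α * fderiv ℝ h0 (ψ r) (dp0 k n i α)) - h0 (ψ r))

/-- The `k`-cocontact Hamilton–De Donder–Weyl map equations for a differentiable map
`ψ̄ : ℝ^k → ℝ^k × M0`, `ψ̄(r) = (t(r), q(r), p(r), z(r))`:
`∂t^β/∂r^α = δ_α^β`, `∂q^i/∂r^α = (∂h/∂p_i^α)∘ψ̄`,
`Σ_α ∂p_i^α/∂r^α = −(∂h/∂q^i + Σ_α p_i^α ∂h/∂z^α)∘ψ̄`, and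
`Σ_α ∂z^α/∂r^α = (Σ_{i,α} p_i^α ∂h/∂p_i^α − h)∘ψ̄`. -/
def CocontactHDWMap (k n : ℕ) (h : Mbar k n → ℝ) (ψ : (Fin k → ℝ) → Mbar k n) : Prop :=
  Differentiable ℝ ψ ∧
  ∀ r : Fin k → ℝ,
    (∀ α β : Fin k, (fderiv ℝ ψ r (Pi.single α 1)).1 β = if α = β then (1:ℝ) else 0) ∧
    (∀ (α : Fin k) (i : Fin n),
      (fderiv ℝ ψ r (Pi.single α 1)).2.1 i = fderiv ℝ h (ψ r) (dpb k n i α)) ∧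
    (∀ i : Fin n, ∑ α, (fderiv ℝ ψ r (Pi.single α 1)).2.2.1 i α
      = -(fderiv ℝ h (ψ r) (dqb k n i)
          + ∑ α, (ψ r).2.2.1 i α * fderiv ℝ h (ψ r) (dzb k n α))) ∧
    (∑ α, (fderiv ℝ ψ r (Pi.single α 1)).2.2.2 α
      = (∑ i, ∑ α, (ψ r).2.2.1 i α * fderiv ℝ h (ψ r) (dpb k n i α)) - h (ψ r))

/-- The `k`-contact Hamilton–De Donder–Weyl field equations for a `k`-vector field
`X = (X_α)` on `M0` with components `(B_α^i, C_{α i}^β, D_α^β)`: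
`B_α^i = ∂h₀/∂p_i^α`, `Σ_α C_{α i}^α = −(∂h₀/∂q^i + Σ_α p_i^α ∂h₀/∂z^α)`, and
`Σ_α D_α^α = Σ_{i,α} p_i^α ∂h₀/∂p_i^α − h₀`, at every point. -/
def ContactHDWField (k n : ℕ) (h0 : M0 k n → ℝ) (X : Fin k → M0 k n → M0 k n) : Prop :=
  ∀ m : M0 k n,
    (∀ (α : Fin k) (i : Fin n), (X α m).1 i = fderiv ℝ h0 m (dp0 k n i α)) ∧
    (∀ i : Fin n, ∑ α, (X α m).2.1 i α
      = -(fderiv ℝ h0 m (dq0 k n i) + ∑ α, m.2.1 i α * fderiv ℝ h0 m (dz0 k n α))) ∧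
    (∑ α, (X α m).2.2 α
      = (∑ i, ∑ α, m.2.1 i α * fderiv ℝ h0 m (dp0 k n i α)) - h0 m)

/-- The `k`-cocontact Hamilton–De Donder–Weyl field equations for a `k`-vector field
`Y = (Y_α)` on `ℝ^k × M0` with components `(A_α^β, B_α^i, C_{α i}^β, D_α^β)`:
`A_α^β = δ_α^β`, `B_α^i = ∂h/∂p_i^α`,
`Σ_α C_{α i}^α = −(∂h/∂q^i + Σ_α p_i^α ∂h/∂z^α)`, and
`Σ_α D_α^α = Σ_{i,α} p_i^α ∂h/∂p_i^α − h`, at every point. -/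
def CocontactHDWField (k n : ℕ) (h : Mbar k n → ℝ)
    (Y : Fin k → Mbar k n → Mbar k n) : Prop :=
  ∀ w : Mbar k n,
    (∀ α β : Fin k, (Y α w).1 β = if α = β then (1:ℝ) else 0) ∧
    (∀ (α : Fin k) (i : Fin n), (Y α w).2.1 i = fderiv ℝ h w (dpb k n i α)) ∧
    (∀ i : Fin n, ∑ α, (Y α w).2.2.1 i α
      = -(fderiv ℝ h w (dqb k n i) + ∑ α, w.2.2.1 i α * fderiv ℝ h w (dzb k n α))) ∧
    (∑ α, (Y α w).2.2.2 α
      = (∑ i, ∑ α, w.2.2.1 i α * fderiv ℝ h w (dpb k n i α)) - h w)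

/-- `ψ : ℝ^k → N` is an integral section of a `k`-vector field `Y = (Y_α)` on `N` if it
is differentiable and `∂ψ/∂r^α(r) = Y_α(ψ(r))` for all `r` and `α`. -/
def IsIntegralSection {N : Type*} [NormedAddCommGroup N] [NormedSpace ℝ N] (k : ℕ)
    (Y : Fin k → N → N) (ψ : (Fin k → ℝ) → N) : Prop :=
  Differentiable ℝ ψ ∧ ∀ (r : Fin k → ℝ) (α : Fin k),
    fderiv ℝ ψ r (Pi.single α 1) = Y α (ψ r)

/-- The suspension `X̄_α(t, m) = (e_α, X_α(m))` of a solution `X` of the `k`-contact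
Hamilton–De Donder–Weyl field equations for `h₀` solves the `k`-cocontact
Hamilton–De Donder–Weyl field equations for `h = h₀ ∘ pr₂`; moreover, a differentiable
map `ψ` is an integral section of `X` iff `r ↦ (t₀ + r, ψ(r))` is an integral section
of the suspension `X̄`, for any `t₀ ∈ ℝ^k`. -/
theorem suspension_solves_cocontact (k n : ℕ) (hk : 1 ≤ k) (hn : 1 ≤ n)
    (h0 : M0 k n → ℝ) (hh0 : ContDiff ℝ (⊤ : ℕ∞) h0)
    (X : Fin k → M0 k n → M0 k n) (hX : ∀ α, ContDiff ℝ (⊤ : ℕ∞) (X α))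
    (hXeq : ContactHDWField k n h0 X) :
    CocontactHDWField k n (fun w => h0 w.2)
      (fun α w => ((Pi.single α 1 : Fin k → ℝ), X α w.2)) ∧
    (∀ (ψ : (Fin k → ℝ) → M0 k n) (t0 : Fin k → ℝ), Differentiable ℝ ψ →
      (IsIntegralSection k X ψ ↔
        IsIntegralSection k (fun α w => ((Pi.single α 1 : Fin k → ℝ), X α w.2))
          (fun r => (t0 + r, ψ r)))) := by
  have hdiff : Differentiable ℝ h0 := hh0.differentiable (by simp)
  have hfd : ∀ (w : Mbar k n) (v : Mbar k n),
      fderiv ℝ (fun w : Mbar k n => h0 w.2) w v = fderiv ℝ h0 w.2 v.2 := by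
    intro w v
    have : HasFDerivAt (fun w : Mbar k n => h0 w.2)
        ((fderiv ℝ h0 w.2).comp (ContinuousLinearMap.snd ℝ (Fin k → ℝ) (M0 k n))) w :=
      ((hdiff w.2).hasFDerivAt).comp w (hasFDerivAt_snd)
    rw [this.fderiv]; rfl
  constructor
  · intro w
    obtain ⟨hB, hC, hD⟩ := hXeq w.2
    refine ⟨?_, ?_, ?_, ?_⟩
    · intro α β
      simp [Pi.single_apply]
      exact if_congr (Iff.intro Eq.symm Eq.symm) rfl rfl
    · intro α i
      rw [hfd]; exact hB α i
    · intro i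
      rw [hfd]
      simp only [hfd]
      exact hC i
    · simp only [hfd]
      exact hD
  · intro ψ t0 hψ
    have hbar : Differentiable ℝ (fun r => ((t0 + r, ψ r) : Mbar k n)) :=
      (differentiable_id.const_add t0).prodMk hψ
    have hfdbar : ∀ (r : Fin k → ℝ) (v : Fin k → ℝ),
        fderiv ℝ (fun r => ((t0 + r, ψ r) : Mbar k n)) r v = (v, fderiv ℝ ψ r v) := by
      intro r v
      have h1 : HasFDerivAt (fun r : Fin k → ℝ => t0 + r)
          (ContinuousLinearMap.id ℝ (Fin k → ℝ)) r := (hasFDerivAt_id r).const_add t0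
      have h2 : HasFDerivAt (fun r => ((t0 + r, ψ r) : Mbar k n))
          ((ContinuousLinearMap.id ℝ (Fin k → ℝ)).prod (fderiv ℝ ψ r)) r :=
        h1.prodMk (hψ r).hasFDerivAt
      rw [h2.fderiv]; rfl
    constructor
    · rintro ⟨_, hint⟩
      refine ⟨hbar, fun r α => ?_⟩
      rw [hfdbar, hint r α]
    · rintro ⟨_, hint⟩
      refine ⟨hψ, fun r α => ?_⟩
      have := hint r α
      rw [hfdbar] at this
      exact congrArg Prod.snd this


end Stmt11
end

section
/- Let g : ℝ × ℝ → ℝ be continuous and continuously differentiable in its second variable, and let γ : ℝ → ℝ be continuous. Let u : ℝ² → ℝ be a twice continuously differentiable solution of the damped wave equation ∂²u/∂t² − ∂²u/∂x² + (∂g/∂u)(t, u) + γ(x) ∂u/∂t = 0 on ℝ². Then there exist continuously differentiable functions zᵗ, zˣ : ℝ² → ℝ such that the map ψ(t,x) = (t, x; u(t,x), pᵗ(t,x), pˣ(t,x); zᵗ(t,x), zˣ(t,x)), with pᵗ = ∂u/∂t and pˣ = −∂u/∂x, satisfies the full 2-cocontact Hamilton–De Donder–Weyl system: ∂u/∂t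 = pᵗ, ∂u/∂x = −pˣ, ∂pᵗ/∂t + ∂pˣ/∂x = −(∂g/∂u)(t,u) − γ(x)pᵗ, and ∂zᵗ/∂t + ∂zˣ/∂x = ½(pᵗ)² − ½(pˣ)² − g(t,u) − γ(x)zᵗ. -/
/-!
Take `pᵗ = ∂ₜu` and `pˣ = -∂ₓu`; the momentum equation is then the PDE itself. In the last
equation put all of `-g` into `∂ₜzᵗ` and the rest into `∂ₓzˣ`:
`zᵗ = -∫₀ᵗ g(s, u(s, x)) ds` (as `g` need not be differentiable in `t`, it can only be integrated
in `t`) and `zˣ = ∫₀ˣ (½(pᵗ)² - ½(pˣ)² - γ zᵗ)(t, r) dr`. Both are `C¹` because their partial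
derivatives exist and are continuous: `∂ₓzᵗ` involves `(∂g/∂u)(t, u)`, which is jointly
continuous only because the PDE expresses it through second derivatives of `u`, and `∂ₜzˣ` is
computed by differentiating under the integral sign.
-/

open Function Filter intervalIntegral

variable {E : Type*} [NormedAddCommGroup E] [NormedSpace ℝ E]

theorem DifferentiableAt.hasDerivAt_slice_fst {f : ℝ × ℝ → E} {w : ℝ × ℝ}
    (hf : DifferentiableAt ℝ f w) :
    HasDerivAt (fun t => f (t, w.2)) (fderiv ℝ f w (1, 0)) w.1 :=
  hf.hasFDerivAt.comp_hasDerivAt w.1 ((hasDerivAt_id w.1).prodMk (hasDerivAt_const w.1 w.2))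

theorem DifferentiableAt.hasDerivAt_slice_snd {f : ℝ × ℝ → E} {w : ℝ × ℝ}
    (hf : DifferentiableAt ℝ f w) :
    HasDerivAt (fun x => f (w.1, x)) (fderiv ℝ f w (0, 1)) w.2 :=
  hf.hasFDerivAt.comp_hasDerivAt w.2 ((hasDerivAt_const w.2 w.1).prodMk (hasDerivAt_id w.2))

theorem contDiff_one_of_hasDerivAt_slices {f f₁ f₂ : ℝ × ℝ → E}
    (h₁ : ∀ w : ℝ × ℝ, HasDerivAt (fun t => f (t, w.2)) (f₁ w) w.1)
    (h₂ : ∀ w : ℝ × ℝ, HasDerivAt (fun x => f (w.1, x)) (f₂ w) w.2)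
    (hf₁ : Continuous f₁) (hf₂ : Continuous f₂) : ContDiff ℝ 1 f := by
  let D : ℝ × ℝ → ℝ × ℝ →L[ℝ] E := fun w =>
    (ContinuousLinearMap.fst ℝ ℝ ℝ).smulRight (f₁ w) +
      (ContinuousLinearMap.snd ℝ ℝ ℝ).smulRight (f₂ w)
  refine contDiff_one_iff_hasFDerivAt.2 ⟨D, by fun_prop, fun w => ?_⟩
  have := hasStrictFDerivAt_uncurry_coprod (f := curry f) (u := w)
    (f₁ := fun t x => (1 : ℝ →L[ℝ] ℝ).smulRight (f₁ (t, x)))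
    (f₂ := fun t x => (1 : ℝ →L[ℝ] ℝ).smulRight (f₂ (t, x)))
    (Eventually.of_forall fun v => (h₁ v).hasFDerivAt)
    (Eventually.of_forall fun v => (h₂ v).hasFDerivAt)
    ((ContinuousLinearMap.smulRightL ℝ ℝ E 1).continuous.comp hf₁).continuousAt
    ((ContinuousLinearMap.smulRightL ℝ ℝ E 1).continuous.comp hf₂).continuousAt
  refine this.hasFDerivAt.congr_fderiv ?_
  ext <;> simp [D, HasUncurry.uncurry]

theorem hasDerivAt_intervalIntegral_of_continuous [CompleteSpace E] {F F' : ℝ → ℝ → E}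
    (hF : Continuous (uncurry F)) (hF' : Continuous (uncurry F'))
    (hd : ∀ y s, HasDerivAt (fun y => F y s) (F' y s) y) (a b x : ℝ) :
    HasDerivAt (fun y => ∫ s in a..b, F y s) (∫ s in a..b, F' x s) x := by
  obtain ⟨M, hM⟩ := ((isCompact_closedBall x 1).prod isCompact_uIcc).bddAbove_image
    hF'.norm.continuousOn
  refine (hasDerivAt_integral_of_dominated_loc_of_deriv_le (bound := fun _ => M)
    (Metric.ball_mem_nhds x one_pos) (.of_forall fun y => ?_) ?_ ?_ ?_ intervalIntegrable_const
    (.of_forall fun s _ y _ => hd y s)).2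
  · exact (hF.comp (continuous_const.prodMk continuous_id)).aestronglyMeasurable
  · exact (hF.comp (continuous_const.prodMk continuous_id)).intervalIntegrable a b
  · exact (hF'.comp (continuous_const.prodMk continuous_id)).aestronglyMeasurable
  · exact .of_forall fun s hs y hy =>
      hM ⟨(y, s), ⟨Metric.ball_subset_closedBall hy, Set.uIoc_subset_uIcc hs⟩, rfl⟩

theorem exists_contDiff_one_fderiv_snd_eq [CompleteSpace E] {F F₁ : ℝ × ℝ → E}
    (hF : Continuous F) (hF₁ : Continuous F₁)
    (hd : ∀ w : ℝ × ℝ, HasDerivAt (fun t => F (t, w.2)) (F₁ w) w.1) :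
    ∃ P : ℝ × ℝ → E, ContDiff ℝ 1 P ∧ ∀ w, fderiv ℝ P w (0, 1) = F w := by
  have hP₂ (w : ℝ × ℝ) : HasDerivAt (fun x => ∫ r in 0..x, F (w.1, r)) (F w) w.2 :=
    ((hF.comp (continuous_const.prodMk continuous_id)).integral_hasStrictDerivAt 0 w.2).hasDerivAt
  have hP₁ (w : ℝ × ℝ) : HasDerivAt (fun t => ∫ r in 0..w.2, F (t, r))
      (∫ r in 0..w.2, F₁ (w.1, r)) w.1 :=
    hasDerivAt_intervalIntegral_of_continuous (F := curry F) (F' := curry F₁) hF hF₁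
      (fun y s => hd (y, s)) 0 w.2 w.1
  have hP : ContDiff ℝ 1 fun w : ℝ × ℝ => ∫ r in 0..w.2, F (w.1, r) :=
    contDiff_one_of_hasDerivAt_slices hP₁ hP₂ (by fun_prop) hF
  exact ⟨_, hP, fun w => (hP.differentiable one_ne_zero w).hasDerivAt_slice_snd.unique (hP₂ w)⟩

theorem exists_contDiff_one_fderiv_fst_eq [CompleteSpace E] {F F₂ : ℝ × ℝ → E}
    (hF : Continuous F) (hF₂ : Continuous F₂)
    (hd : ∀ w : ℝ × ℝ, HasDerivAt (fun x => F (w.1, x)) (F₂ w) w.2) :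
    ∃ P : ℝ × ℝ → E, ContDiff ℝ 1 P ∧ ∀ w, fderiv ℝ P w (1, 0) = F w := by
  obtain ⟨P, hP, hP₂⟩ := exists_contDiff_one_fderiv_snd_eq (hF.comp continuous_swap)
    (hF₂.comp continuous_swap) fun w => hd w.swap
  have hPs : ContDiff ℝ 1 (P ∘ Prod.swap) := hP.comp (contDiff_snd.prodMk contDiff_fst)
  refine ⟨P ∘ Prod.swap, hPs, fun w => ?_⟩
  rw [(hPs.differentiable one_ne_zero w).hasDerivAt_slice_fst.unique
    (hP.differentiable one_ne_zero w.swap).hasDerivAt_slice_snd]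
  exact hP₂ w.swap

theorem exists_contDiff_one_fderiv_fst_eq_comp [CompleteSpace E] {g : ℝ → ℝ → E}
    {u : ℝ × ℝ → ℝ} (hgc : Continuous (uncurry g)) (hg : ∀ t, Differentiable ℝ (g t))
    (hu : ContDiff ℝ 1 u) (hdg : Continuous fun w : ℝ × ℝ => deriv (g w.1) (u w)) :
    ∃ P : ℝ × ℝ → E, ContDiff ℝ 1 P ∧ ∀ w, fderiv ℝ P w (1, 0) = g w.1 (u w) :=
  exists_contDiff_one_fderiv_fst_eq (by fun_prop)
    (((hu.continuous_fderiv one_ne_zero).clm_apply continuous_const).smul hdg)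
    fun w => (hg w.1 _).hasDerivAt.scomp w.2 (hu.differentiable one_ne_zero w).hasDerivAt_slice_snd

theorem exists_contDiff_one_fderiv_snd_eq_add_smul [CompleteSpace E] {Φ Ψ : ℝ × ℝ → E}
    {c : ℝ → ℝ} (hΦ : ContDiff ℝ 1 Φ) (hΨ : ContDiff ℝ 1 Ψ) (hc : Continuous c) :
    ∃ P : ℝ × ℝ → E, ContDiff ℝ 1 P ∧ ∀ w, fderiv ℝ P w (0, 1) = Φ w + c w.2 • Ψ w :=
  exists_contDiff_one_fderiv_snd_eq (by fun_prop)
    (((hΦ.continuous_fderiv one_ne_zero).clm_apply continuous_const).add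
      ((hc.comp continuous_snd).smul
        ((hΨ.continuous_fderiv one_ne_zero).clm_apply continuous_const)))
    fun w => (hΦ.differentiable one_ne_zero w).hasDerivAt_slice_fst.add
      ((hΨ.differentiable one_ne_zero w).hasDerivAt_slice_fst.const_smul (c w.2))

/-- Any `C²` solution `u` of the damped wave equation with forcing
`u_tt − u_xx + (∂g/∂u)(t,u) + γ(x) u_t = 0` can be completed, with `pᵗ = u_t` and
`pˣ = −u_x`, by continuously differentiable functions `zᵗ, zˣ` to a solution of the
full 2-cocontact Hamilton–De Donder–Weyl system for the Hamiltonian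
`h = ½(pᵗ)² − ½(pˣ)² + g(t,u) + γ(x)zᵗ`. Here points of `ℝ²` are pairs `w = (t, x)`,
`∂/∂t` is the directional derivative along `(1,0)` and `∂/∂x` along `(0,1)`. -/
theorem damped_wave_lifts_to_hdw (g : ℝ → ℝ → ℝ) (γ : ℝ → ℝ)
    (hgc : Continuous (Function.uncurry g)) (hg : ∀ t, ContDiff ℝ 1 (g t))
    (hγ : Continuous γ)
    (u : ℝ × ℝ → ℝ) (hu : ContDiff ℝ 2 u)
    (hpde : ∀ w : ℝ × ℝ,
      fderiv ℝ (fun y => fderiv ℝ u y (1, 0)) w (1, 0)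
      - fderiv ℝ (fun y => fderiv ℝ u y (0, 1)) w (0, 1)
      + deriv (g w.1) (u w) + γ w.2 * fderiv ℝ u w (1, 0) = 0) :
    ∃ zt zx pt px : ℝ × ℝ → ℝ,
      ContDiff ℝ 1 zt ∧ ContDiff ℝ 1 zx ∧
      (∀ w : ℝ × ℝ, fderiv ℝ u w (1, 0) = pt w) ∧
      (∀ w : ℝ × ℝ, fderiv ℝ u w (0, 1) = -px w) ∧
      (∀ w : ℝ × ℝ, fderiv ℝ pt w (1, 0) + fderiv ℝ px w (0, 1)
        = -(deriv (g w.1) (u w)) - γ w.2 * pt w) ∧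
      (∀ w : ℝ × ℝ, fderiv ℝ zt w (1, 0) + fderiv ℝ zx w (0, 1)
        = (1/2) * pt w ^ 2 - (1/2) * px w ^ 2 - g w.1 (u w) - γ w.2 * zt w) := by
  set A : ℝ × ℝ → ℝ := fun w => fderiv ℝ u w (1, 0)
  set B : ℝ × ℝ → ℝ := fun w => fderiv ℝ u w (0, 1)
  have hA : ContDiff ℝ 1 A := (hu.fderiv_right le_rfl).clm_apply contDiff_const
  have hB : ContDiff ℝ 1 B := (hu.fderiv_right le_rfl).clm_apply contDiff_const
  have hgu (w : ℝ × ℝ) : deriv (g w.1) (u w)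
      = fderiv ℝ B w (0, 1) - fderiv ℝ A w (1, 0) - γ w.2 * A w := by
    linarith [hpde w]
  have hgu_cont : Continuous fun w : ℝ × ℝ => deriv (g w.1) (u w) := by
    have := hA.continuous_fderiv one_ne_zero
    have := hB.continuous_fderiv one_ne_zero
    simp_rw [hgu]
    fun_prop
  obtain ⟨P, hP, hP_t⟩ := exists_contDiff_one_fderiv_fst_eq_comp hgc
    (fun t => (hg t).differentiable one_ne_zero) (hu.of_le one_le_two) hgu_cont
  obtain ⟨zx, hzx, hzx_x⟩ := exists_contDiff_one_fderiv_snd_eq_add_smul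
    (Φ := fun w => 1/2 * A w ^ 2 - 1/2 * B w ^ 2) (by fun_prop) hP hγ
  refine ⟨-P, zx, A, fun w => -B w, hP.neg, hzx, fun w => rfl, fun w => (neg_neg _).symm,
    fun w => ?_, fun w => ?_⟩
  · rw [fderiv_fun_neg, neg_apply, hgu]
    ring
  · rw [fderiv_neg, neg_apply, hP_t, hzx_x, smul_eq_mul, Pi.neg_apply]
    ring
end
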